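/- arXiv:2003.02248 — 2 statements merged into one kernel-verified Lean document; each statement's English description precedes it below -/
import Mathlib

section
/- Let δ > 0 and s̄ ∈ [0,1). There exists an increasing continuous function ω (depending on δ and s̄) with ω(0) = 0 such that for every s ∈ [0, s̄] and every η ≥ 0, the integral of |y|^{-(d+s)} over the set B_η \ (B_δ(δ e_d) ∪ B_δ(−δ e_d)) is at most ω(η). -/
/-!
Outside the two tangent balls every point satisfies `2δ |y_d| ≤ |y|²`, so the part of `B_r` left
over lies in a slab of width `r² / δ` and has volume `O(r^(d+1) / δ)`. On the dyadic annulus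
`|y| ~ η 2^(-k)` the kernel is `O((η 2^(-k))^(-(d+s)))`, so the annuli contribute a geometric
series `O(η^(1-s) Σ 2^(-k(1-s)))`, whose ratio `2^(s-1) ≤ 2^(s̄-1) < 1` is uniform in `s ≤ s̄`.
As `η^(1-s) ≤ η^(1-s̄) + η`, a modulus `ω(η) = (K+1) η + K η^(1-s̄)` works.
-/

open MeasureTheory Metric Filter Set

/-- Volume of the unit ball in `ℝ^d` (the constant `ω_d`). -/
noncomputable def unitBallVol (d : ℕ) : ℝ :=
  (volume (Metric.ball (0 : EuclideanSpace ℝ (Fin d)) 1)).toReal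

/-- `χ_{ℝ^d ∖ E}(y) - χ_E(y)`. -/
noncomputable def chiDiff {d : ℕ} (E : Set (EuclideanSpace ℝ (Fin d)))
    (y : EuclideanSpace ℝ (Fin d)) : ℝ :=
  Set.indicator Eᶜ (fun _ => (1:ℝ)) y - Set.indicator E (fun _ => (1:ℝ)) y

/-- The unit vector `e_d` (last coordinate direction) in `ℝ^d`. -/
noncomputable def ed (d : ℕ) : EuclideanSpace ℝ (Fin d) :=
  if h : 0 < d then EuclideanSpace.single (⟨d - 1, by omega⟩ : Fin d) 1 else 0

/-- `H` is the value of the `s`-fractional curvature of `E` at `x`, defined as the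
principal value `lim_{r→0⁺} ∫_{ℝ^d ∖ B_r(x)} (χ_{Eᶜ}(y) - χ_E(y))/|x-y|^{d+s} dy`. -/
def HasFracCurv {d : ℕ} (s : ℝ) (E : Set (EuclideanSpace ℝ (Fin d)))
    (x : EuclideanSpace ℝ (Fin d)) (H : ℝ) : Prop :=
  Tendsto (fun r : ℝ => ∫ y in (Metric.ball x r)ᶜ, chiDiff E y / ‖y - x‖ ^ ((d:ℝ) + s))
    (nhdsWithin 0 (Set.Ioi 0)) (nhds H)

/-- Uniform two-sided (interior and exterior) tangent ball condition: the standard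
geometric characterization of a set with compact boundary of class `C^{1,1}`. -/
def TwoSidedBallCond {d : ℕ} (E : Set (EuclideanSpace ℝ (Fin d))) : Prop :=
  ∃ δ > 0, ∀ x ∈ frontier E, ∃ ν : EuclideanSpace ℝ (Fin d), ‖ν‖ = 1 ∧
    Metric.ball (x - δ • ν) δ ⊆ E ∧ Metric.ball (x + δ • ν) δ ⊆ Eᶜ

/-- The `0`-fractional curvature `H^0(x,E)`, defined with the cutoff radius
`R = diam E + 1 > diam E` (the value is independent of the choice of `R > diam E`). -/
noncomputable def H0 {d : ℕ} (E : Set (EuclideanSpace ℝ (Fin d)))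
    (x : EuclideanSpace ℝ (Fin d)) : ℝ :=
  limUnder (nhdsWithin (0:ℝ) (Set.Ioi 0))
    (fun r => ∫ y in Metric.ball x (Metric.diam E + 1) \ Metric.ball x r,
      chiDiff E y / ‖y - x‖ ^ (d:ℝ))
  - d * unitBallVol d * Real.log (Metric.diam E + 1)

/-- The `s`-Riesz curvature `K^s(x,E) = -2 ∫_E |x-y|^{-(d+s)} dy` of a compact set. -/
noncomputable def Ks {d : ℕ} (s : ℝ) (E : Set (EuclideanSpace ℝ (Fin d)))
    (x : EuclideanSpace ℝ (Fin d)) : ℝ :=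
  -2 * ∫ y in E, 1 / ‖x - y‖ ^ ((d:ℝ) + s)

/-- Outer Minkowski curvature `κ_r^{ou}(x,E)` relative to a normal (vector) field `ν`. -/
noncomputable def kappaOut {d : ℕ} (E : Set (EuclideanSpace ℝ (Fin d)))
    (ν : EuclideanSpace ℝ (Fin d) → EuclideanSpace ℝ (Fin d)) (r : ℝ)
    (x : EuclideanSpace ℝ (Fin d)) : ℝ :=
  if Metric.infDist (x + r • ν x) E = r then
    (1 / (2 * r)) * LinearMap.det
      ((ContinuousLinearMap.id ℝ (EuclideanSpace ℝ (Fin d)) + r • fderiv ℝ ν x).toLinearMap)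
  else 0

/-- Inner Minkowski curvature `κ_r^{in}(x,E)` relative to a normal (vector) field `ν`. -/
noncomputable def kappaIn {d : ℕ} (E : Set (EuclideanSpace ℝ (Fin d)))
    (ν : EuclideanSpace ℝ (Fin d) → EuclideanSpace ℝ (Fin d)) (r : ℝ)
    (x : EuclideanSpace ℝ (Fin d)) : ℝ :=
  if Metric.infDist (x - r • ν x) Eᶜ = r then
    -(1 / (2 * r)) * LinearMap.det
      ((ContinuousLinearMap.id ℝ (EuclideanSpace ℝ (Fin d)) - r • fderiv ℝ ν x).toLinearMap)
  else 0

/-- Regularized Minkowski curvature `κ_r^f(x,E) = ∫_0^1 (-s f'(s)) κ_{rs}(x,E) ds`. -/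
noncomputable def kappaF {d : ℕ} (f : ℝ → ℝ) (E : Set (EuclideanSpace ℝ (Fin d)))
    (ν : EuclideanSpace ℝ (Fin d) → EuclideanSpace ℝ (Fin d)) (r : ℝ)
    (x : EuclideanSpace ℝ (Fin d)) : ℝ :=
  ∫ t in Set.Ioc (0:ℝ) 1, (-t * deriv f t) * (kappaOut E ν (r*t) x + kappaIn E ν (r*t) x)

lemma dyadic_weight_eq {p q C η : ℝ} (hη : 0 < η) (k : ℕ) :
    1 / (η / 2 ^ (k + 1)) ^ p * (C * (η / 2 ^ k) ^ q) =
      C * 2 ^ q * η ^ (q - p) * (2 ^ (p - q)) ^ (k + 1) := by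
  set x : ℝ := 2 ^ (k + 1)
  have hx : 0 < x := by positivity
  have hdouble : η / 2 ^ k = 2 * (η / x) := by simp only [x, pow_succ]; field_simp
  have hρ : ((2:ℝ) ^ (p - q)) ^ (k + 1) = x ^ (p - q) := by
    rw [← Real.rpow_natCast, ← Real.rpow_mul two_pos.le, mul_comm, Real.rpow_mul two_pos.le,
      Real.rpow_natCast]
  rw [hρ, hdouble, Real.mul_rpow two_pos.le (by positivity), Real.div_rpow hη.le hx.le,
    Real.div_rpow hη.le hx.le, Real.rpow_sub hη, Real.rpow_sub hx]
  field_simp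

def dyadicAnnulus {E : Type*} [NormedAddCommGroup E] (η : ℝ) (k : ℕ) : Set E :=
  closedBall 0 (η / 2 ^ k) \ closedBall 0 (η / 2 ^ (k + 1))

lemma ball_subset_insert_iUnion_dyadicAnnulus {E : Type*} [NormedAddCommGroup E] (η : ℝ) :
    ball (0 : E) η ⊆ insert 0 (⋃ k, dyadicAnnulus η k) := by
  intro y hyη
  rcases eq_or_ne y 0 with rfl | hy0
  · exact mem_insert _ _
  have hy : 0 < ‖y‖ := norm_pos_iff.mpr hy0
  rw [mem_ball_zero_iff] at hyη
  obtain ⟨k, hk, hk'⟩ := exists_nat_pow_near ((one_le_div hy).mpr hyη.le) (one_lt_two (α := ℝ))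
  refine mem_insert_of_mem _ (mem_iUnion.mpr ⟨k, ?_, ?_⟩)
  · rw [mem_closedBall_zero_iff]
    rwa [le_div_iff₀ hy, ← le_div_iff₀' (by positivity)] at hk
  · rw [mem_closedBall_zero_iff, not_le]
    rwa [div_lt_iff₀ hy, ← div_lt_iff₀' (by positivity)] at hk'

lemma lintegral_dyadicAnnulus_diff_one_div_rpow_norm_le {E : Type*} [NormedAddCommGroup E]
    [MeasurableSpace E] (μ : Measure E) (T : Set E) {p q C η : ℝ} (hp : 0 ≤ p) (hη : 0 < η)
    (k : ℕ) (hT : μ (closedBall 0 (η / 2 ^ k) \ T) ≤ ENNReal.ofReal (C * (η / 2 ^ k) ^ q)) :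
    ∫⁻ y in dyadicAnnulus η k \ T, ENNReal.ofReal (1 / ‖y‖ ^ p) ∂μ ≤
      ENNReal.ofReal (C * 2 ^ q * η ^ (q - p) * (2 ^ (p - q)) ^ (k + 1)) := by
  set b := η / 2 ^ (k + 1)
  have hf : ∀ y ∈ dyadicAnnulus η k \ T, ENNReal.ofReal (1 / ‖y‖ ^ p) ≤
      ENNReal.ofReal (1 / b ^ p) := by
    rintro y ⟨⟨-, hy⟩, -⟩
    rw [mem_closedBall_zero_iff, not_le] at hy
    gcongr
  calc ∫⁻ y in dyadicAnnulus η k \ T, ENNReal.ofReal (1 / ‖y‖ ^ p) ∂μ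
      ≤ ∫⁻ _ in dyadicAnnulus η k \ T, ENNReal.ofReal (1 / b ^ p) ∂μ :=
        setLIntegral_mono measurable_const hf
    _ = ENNReal.ofReal (1 / b ^ p) * μ (dyadicAnnulus η k \ T) := setLIntegral_const _ _
    _ ≤ ENNReal.ofReal (1 / b ^ p) * ENNReal.ofReal (C * (η / 2 ^ k) ^ q) := by
        gcongr
        exact (measure_mono (sdiff_subset_sdiff_left sdiff_subset)).trans hT
    _ = _ := by rw [← ENNReal.ofReal_mul (by positivity), dyadic_weight_eq hη]

lemma lintegral_ball_diff_one_div_rpow_norm_le {E : Type*} [NormedAddCommGroup E]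
    [MeasurableSpace E] [MeasurableSingletonClass E] (μ : Measure E) (T : Set E)
    {p q C η : ℝ} (hp : 0 < p) (hpq : p < q) (hC : 0 ≤ C) (hη : 0 < η)
    (hT : ∀ r ∈ Ioc 0 η, μ (closedBall 0 r \ T) ≤ ENNReal.ofReal (C * r ^ q)) :
    ∫⁻ y in ball 0 η \ T, ENNReal.ofReal (1 / ‖y‖ ^ p) ∂μ ≤
      ENNReal.ofReal (C * 2 ^ p / (1 - 2 ^ (p - q)) * η ^ (q - p)) := by
  set f : E → ENNReal := fun y => ENNReal.ofReal (1 / ‖y‖ ^ p)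
  set ρ : ℝ := 2 ^ (p - q)
  have hρ₀ : 0 ≤ ρ := by positivity
  have hρ₁ : ρ < 1 := Real.rpow_lt_one_of_one_lt_of_neg (by norm_num) (by linarith)
  have hcover : ball 0 η \ T ⊆ insert 0 (⋃ k, dyadicAnnulus η k \ T) := by
    rw [← iUnion_sdiff]
    exact (sdiff_subset_sdiff_left (ball_subset_insert_iUnion_dyadicAnnulus η)).trans
      insert_sdiff_subset
  have hA (k : ℕ) := lintegral_dyadicAnnulus_diff_one_div_rpow_norm_le μ T hp.le hη k
    (hT _ ⟨by positivity, div_le_self hη.le (one_le_pow₀ one_le_two)⟩)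
  calc ∫⁻ y in ball 0 η \ T, f y ∂μ
      ≤ ∫⁻ y in {0} ∪ ⋃ k, dyadicAnnulus η k \ T, f y ∂μ := lintegral_mono_set hcover
    _ ≤ ∫⁻ y in {0}, f y ∂μ + ∫⁻ y in ⋃ k, dyadicAnnulus η k \ T, f y ∂μ :=
        lintegral_union_le _ _ _
    _ ≤ ∑' k, ∫⁻ y in dyadicAnnulus η k \ T, f y ∂μ := by
        simp only [lintegral_singleton, f, norm_zero, Real.zero_rpow hp.ne', div_zero,
          ENNReal.ofReal_zero, zero_mul, zero_add]
        exact lintegral_iUnion_le _ _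
    _ ≤ ∑' k, ENNReal.ofReal (C * 2 ^ q * η ^ (q - p) * ρ ^ (k + 1)) := ENNReal.tsum_le_tsum hA
    _ = ENNReal.ofReal (∑' k, C * 2 ^ q * η ^ (q - p) * ρ ^ (k + 1)) :=
        (ENNReal.ofReal_tsum_of_nonneg (fun k => by positivity)
          ((summable_geometric_of_lt_one hρ₀ hρ₁).mul_left (C * 2 ^ q * η ^ (q - p) * ρ)
            |>.congr fun k => by ring)).symm
    _ = _ := by
        have h2ρ : (2:ℝ) ^ q * ρ = 2 ^ p := by rw [← Real.rpow_add two_pos]; ring_nf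
        simp_rw [pow_succ, ← mul_assoc]
        rw [tsum_mul_right, tsum_mul_left, tsum_geometric_of_lt_one hρ₀ hρ₁, ← h2ρ]
        field_simp

lemma two_mul_abs_inner_le_norm_sq {F : Type*} [NormedAddCommGroup F] [InnerProductSpace ℝ F]
    {ν y : F} {δ : ℝ} (hν : ‖ν‖ = 1) (h₁ : y ∉ ball (δ • ν) δ) (h₂ : y ∉ ball (-(δ • ν)) δ) :
    2 * δ * |inner ℝ y ν| ≤ ‖y‖ ^ 2 := by
  rcases lt_or_ge δ 0 with hδ | hδ
  · nlinarith [abs_nonneg (inner ℝ y ν), sq_nonneg ‖y‖]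
  rw [mem_ball, not_lt, dist_eq_norm] at h₁ h₂
  rw [sub_neg_eq_add] at h₂
  have e₁ := pow_le_pow_left₀ hδ h₁ 2
  have e₂ := pow_le_pow_left₀ hδ h₂ 2
  rw [norm_sub_sq_real, real_inner_smul_right, norm_smul, Real.norm_of_nonneg hδ, hν] at e₁
  rw [norm_add_sq_real, real_inner_smul_right, norm_smul, Real.norm_of_nonneg hδ, hν] at e₂
  rcases abs_cases (inner ℝ y ν) with ⟨h, -⟩ | ⟨h, -⟩ <;> rw [h] <;> nlinarith

lemma volume_closedBall_inter_abs_apply_le {ι : Type*} [Fintype ι] (i₀ : ι) {r h : ℝ}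
    (hr : 0 ≤ r) (hh : 0 ≤ h) :
    volume (closedBall (0 : EuclideanSpace ℝ ι) r ∩ {y | |y i₀| ≤ h}) ≤
      ENNReal.ofReal ((2 * r) ^ (Fintype.card ι - 1) * (2 * h)) := by
  classical
  set c : ι → ℝ := fun i => if i = i₀ then h else r
  have hbox : closedBall (0 : EuclideanSpace ℝ ι) r ∩ {y | |y i₀| ≤ h} ⊆
      (MeasurableEquiv.toLp 2 (ι → ℝ)).symm ⁻¹' univ.pi fun i => Icc (-c i) (c i) := by
    rintro y ⟨hyr, hyh⟩ i -
    rw [mem_closedBall_zero_iff] at hyr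
    refine abs_le.mp ?_
    by_cases hi : i = i₀
    · subst hi; simpa [c] using hyh
    · simpa [c, hi] using (Real.norm_eq_abs _ ▸ PiLp.norm_apply_le y i).trans hyr
  calc volume (closedBall (0 : EuclideanSpace ℝ ι) r ∩ {y | |y i₀| ≤ h})
      ≤ volume (univ.pi fun i => Icc (-c i) (c i)) := by
        rw [← (EuclideanSpace.volume_preserving_symm_measurableEquiv_toLp ι).measure_preimage
          (MeasurableSet.univ_pi fun i => measurableSet_Icc).nullMeasurableSet]
        exact measure_mono hbox
    _ = ∏ i, ENNReal.ofReal (2 * c i) := by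
        rw [volume_pi_pi]
        refine Finset.prod_congr rfl fun i _ => ?_
        rw [Real.volume_Icc]; ring_nf
    _ = ENNReal.ofReal ((2 * r) ^ (Fintype.card ι - 1) * (2 * h)) := by
        rw [← Finset.mul_prod_erase _ _ (Finset.mem_univ i₀), Finset.prod_congr rfl
          fun i hi => show ENNReal.ofReal (2 * c i) = ENNReal.ofReal (2 * r) by
            simp [c, Finset.ne_of_mem_erase hi], Finset.prod_const,
          Finset.card_erase_of_mem (Finset.mem_univ i₀), Finset.card_univ,
          ← ENNReal.ofReal_pow (by positivity), ← ENNReal.ofReal_mul (by positivity), mul_comm]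
        simp [c]

lemma volume_closedBall_diff_tangentBalls_le {d : ℕ} (hd : 0 < d) {δ r : ℝ} (hδ : 0 < δ)
    (hr : 0 ≤ r) :
    volume (closedBall (0 : EuclideanSpace ℝ (Fin d)) r \
        (ball (δ • ed d) δ ∪ ball (-(δ • ed d)) δ)) ≤
      ENNReal.ofReal (2 ^ (d - 1) / δ * r ^ ((d : ℝ) + 1)) := by
  set i₀ : Fin d := ⟨d - 1, by omega⟩
  have hed : ed d = EuclideanSpace.single i₀ 1 := dif_pos hd
  have hslab : closedBall (0 : EuclideanSpace ℝ (Fin d)) r \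
      (ball (δ • ed d) δ ∪ ball (-(δ • ed d)) δ) ⊆
      closedBall 0 r ∩ {y | |y i₀| ≤ r ^ 2 / (2 * δ)} := by
    rintro y ⟨hyr, hy⟩
    refine ⟨hyr, ?_⟩
    have key := two_mul_abs_inner_le_norm_sq (by simp [hed]) (fun h => hy (Or.inl h))
      (fun h => hy (Or.inr h))
    rw [hed, EuclideanSpace.inner_single_right, conj_trivial, one_mul] at key
    rw [mem_closedBall_zero_iff] at hyr
    rw [mem_ofPred_eq, le_div_iff₀ (by positivity)]
    nlinarith [pow_le_pow_left₀ (norm_nonneg y) hyr 2]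
  refine (measure_mono hslab).trans ((volume_closedBall_inter_abs_apply_le i₀ hr
    (by positivity)).trans_eq (congrArg ENNReal.ofReal ?_))
  have hpow : r ^ ((d : ℝ) + 1) = r ^ (d - 1) * r ^ 2 := by
    rw [← pow_add, ← Real.rpow_natCast, Nat.cast_add, Nat.cast_sub hd]; ring_nf
  rw [Fintype.card_fin, hpow, mul_pow]
  field_simp

lemma setIntegral_ball_diff_one_div_rpow_norm_le {E : Type*} [NormedAddCommGroup E]
    [MeasurableSpace E] [BorelSpace E] (μ : Measure E) (T : Set E)
    {p q C η : ℝ} (hp : 0 < p) (hpq : p < q) (hC : 0 ≤ C) (hη : 0 < η)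
    (hT : ∀ r ∈ Ioc 0 η, μ (closedBall 0 r \ T) ≤ ENNReal.ofReal (C * r ^ q)) :
    ∫ y in ball 0 η \ T, 1 / ‖y‖ ^ p ∂μ ≤ C * 2 ^ p / (1 - 2 ^ (p - q)) * η ^ (q - p) := by
  have hρ : (2:ℝ) ^ (p - q) < 1 := Real.rpow_lt_one_of_one_lt_of_neg (by norm_num) (by linarith)
  rw [integral_eq_lintegral_of_nonneg_ae (ae_of_all _ fun y => by positivity)
    ((measurable_norm.pow_const p).const_div 1).aestronglyMeasurable]
  exact ENNReal.toReal_le_of_le_ofReal (by have := sub_pos.mpr hρ; positivity)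
    (lintegral_ball_diff_one_div_rpow_norm_le μ T hp hpq hC hη hT)

lemma setIntegral_ball_diff_tangentBalls_le {d : ℕ} (hd : 0 < d) {δ s η : ℝ} (hδ : 0 < δ)
    (hs₀ : 0 ≤ s) (hs₁ : s < 1) (hη : 0 < η) :
    ∫ y in ball (0 : EuclideanSpace ℝ (Fin d)) η \ (ball (δ • ed d) δ ∪ ball (-(δ • ed d)) δ),
        1 / ‖y‖ ^ ((d : ℝ) + s) ≤
      2 ^ (d - 1) / δ * 2 ^ ((d : ℝ) + s) / (1 - 2 ^ (s - 1)) * η ^ (1 - s) := by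
  have h := setIntegral_ball_diff_one_div_rpow_norm_le volume _ (by positivity)
    (by linarith : (d : ℝ) + s < d + 1) (by positivity) hη
    fun r hr => volume_closedBall_diff_tangentBalls_le hd hδ hr.1.le
  rwa [show (d : ℝ) + s - (d + 1) = s - 1 by ring, show (d : ℝ) + 1 - (d + s) = 1 - s by ring] at h

lemma rpow_le_rpow_add_rpow {x a b c : ℝ} (hx : 0 < x) (hab : a ≤ b) (hbc : b ≤ c) :
    x ^ b ≤ x ^ a + x ^ c := by
  rcases le_total x 1 with h | h
  · linarith [Real.rpow_le_rpow_of_exponent_ge hx h hab, Real.rpow_nonneg hx.le c]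
  · linarith [Real.rpow_le_rpow_of_exponent_le h hbc, Real.rpow_nonneg hx.le a]

/-- a uniform (in `s ∈ [0, s̄]`) modulus bounding the integral of the
kernel `|y|^{-(d+s)}` over `B_η ∖ (B_δ(δe_d) ∪ B_δ(-δe_d))`. -/
theorem stmt_2 (d : ℕ) (hd : 0 < d) (δ sbar : ℝ) (hδ : 0 < δ)
    (hsbar : sbar ∈ Set.Ico (0:ℝ) 1) :
    ∃ ω : ℝ → ℝ, StrictMono ω ∧ Continuous ω ∧ ω 0 = 0 ∧
      ∀ s ∈ Set.Icc (0:ℝ) sbar, ∀ η : ℝ, 0 ≤ η →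
        (∫ y in Metric.ball (0 : EuclideanSpace ℝ (Fin d)) η \
            (Metric.ball (δ • ed d) δ ∪ Metric.ball (-(δ • ed d)) δ),
          1 / ‖y‖ ^ ((d:ℝ) + s)) ≤ ω η := by
  obtain ⟨hsbar₀, hsbar₁⟩ := hsbar
  have hgap : 0 < 1 - (2:ℝ) ^ (sbar - 1) :=
    sub_pos.mpr (Real.rpow_lt_one_of_one_lt_of_neg (by norm_num) (by linarith))
  set K := 2 ^ (d - 1) / δ * 2 ^ ((d : ℝ) + sbar) / (1 - 2 ^ (sbar - 1))
  have hK : 0 < K := by positivity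
  have hmono : Monotone fun η : ℝ => max η 0 ^ (1 - sbar) := fun a b hab =>
    Real.rpow_le_rpow (le_max_right _ _) (max_le_max_right 0 hab) (by linarith)
  refine ⟨fun η => (K + 1) * η + K * max η 0 ^ (1 - sbar),
    (strictMono_mul_left_of_pos (by positivity)).add_monotone (hmono.const_mul hK.le),
    (continuous_const.mul continuous_id).add (continuous_const.mul
      ((continuous_id.max continuous_const).rpow_const fun _ => Or.inr (by linarith))),
    by simp [Real.zero_rpow (by linarith : 1 - sbar ≠ 0)], ?_⟩
  rintro s ⟨hs₀, hs⟩ η hη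
  rcases hη.eq_or_lt with rfl | hη
  · simp [Real.zero_rpow (by linarith : 1 - sbar ≠ 0)]
  have hC : 2 ^ (d - 1) / δ * 2 ^ ((d : ℝ) + s) / (1 - 2 ^ (s - 1)) ≤ K := by
    simp only [K]; gcongr <;> norm_num
  calc _ ≤ 2 ^ (d - 1) / δ * 2 ^ ((d : ℝ) + s) / (1 - 2 ^ (s - 1)) * η ^ (1 - s) :=
        setIntegral_ball_diff_tangentBalls_le hd hδ hs₀ (by linarith) hη
    _ ≤ K * (η ^ (1 - sbar) + η ^ (1 : ℝ)) := by
        gcongr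
        exact rpow_le_rpow_add_rpow hη (by linarith) (by linarith)
    _ ≤ (K + 1) * η + K * max η 0 ^ (1 - sbar) := by
        rw [max_eq_left hη.le, Real.rpow_one]; nlinarith
end

section
/- Let E ⊂ R^d be measurable and δ > 0 be such that B_δ(−δ e_d) ⊆ E and B_δ(δ e_d) ⊆ R^d \ E. Then for every s ∈ [0,1) and every η > 0, the principal value lim_{r→0+} ∫_{B_η \ B_r} (χ_{R^d\E}(y) − χ_E(y))/|y|^{d+s} dy exists and equals ∫_{B_η \ (B_δ(−δe_d) ∪ B_δ(δe_d))} (χ_{R^d\E}(y) − χ_E(y))/|y|^{d+s} dy. -/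
open MeasureTheory Metric Filter Set

/-!
Outside the two tangent balls `B_δ(±δ e_d)` one has `2δ |y_d| ≤ |y|²`, so within `B_ρ` that region
lies in a slab of width `ρ² / δ` and has volume `O(ρ^(d+1))`; summing over dyadic shells shows that
`|y|^(-(d+s))` is integrable there as soon as `s < 1`. The reflection `y ↦ -y` swaps the two balls,
and `χ_{Eᶜ} - χ_E` is `1` on one and `-1` on the other, so over each annulus `B_η \ B_r` the part
inside the balls cancels. What remains is the integral over `B_η \ B_r` minus the balls, which
converges as `r → 0` by integrability.
-/

open scoped RealInnerProductSpace Topology ENNReal Pointwise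

lemma tendsto_measure_ball_nhdsGT_zero {X : Type*} [MetricSpace X] [MeasurableSpace X]
    [OpensMeasurableSpace X] (μ : Measure X) [IsLocallyFiniteMeasure μ] [NullSingletonClass μ]
    (x : X) : Tendsto (fun r => μ (ball x r)) (𝓝[>] 0) (𝓝 0) := by
  have h := tendsto_measure_biInter_gt (μ := μ) (s := fun r => ball x r) (a := 0)
    (fun r _ => measurableSet_ball.nullMeasurableSet)
    (fun i j _ hij => ball_subset_ball hij) ?_
  · simpa [Function.comp_def, biInter_gt_ball] using h
  · obtain ⟨ε, hε, hfin⟩ := (μ.finiteAt_nhds x).exists_mem_basis nhds_basis_ball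
    exact ⟨ε, hε, hfin.ne⟩

lemma tendsto_setIntegral_diff_ball {X : Type*} [MetricSpace X] [MeasurableSpace X]
    [OpensMeasurableSpace X] {μ : Measure X} [IsLocallyFiniteMeasure μ] [NullSingletonClass μ]
    {f : X → ℝ} {T : Set X} (hf : IntegrableOn f T μ) (x : X) :
    Tendsto (fun r => ∫ y in T \ ball x r, f y ∂μ) (𝓝[>] 0) (𝓝 (∫ y in T, f y ∂μ)) := by
  have hsmall : Tendsto (fun r => ∫ y in ball x r, f y ∂μ.restrict T) (𝓝[>] 0) (𝓝 0) :=
    hf.tendsto_setIntegral_nhds_zero <| tendsto_of_tendsto_of_tendsto_of_le_of_le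
      tendsto_const_nhds (tendsto_measure_ball_nhdsGT_zero μ x) (fun _ => zero_le)
      fun r => Measure.restrict_apply_le T _
  have hsplit : ∀ r, ∫ y in T \ ball x r, f y ∂μ
      = (∫ y in T, f y ∂μ) - ∫ y in ball x r, f y ∂μ.restrict T := fun r => by
    rw [Measure.restrict_restrict measurableSet_ball, inter_comm,
      ← integral_inter_add_sdiff measurableSet_ball hf, add_sub_cancel_left]
  simpa [hsplit] using hsmall.const_sub (∫ y in T, f y ∂μ)

lemma setIntegral_union_neg_eq_zero {G F : Type*} [AddGroup G] [MeasurableSpace G]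
    [MeasurableNeg G] [NormedAddCommGroup F] [NormedSpace ℝ F] {μ : Measure G}
    [μ.IsNegInvariant] {f : G → F} {B : Set G} (hB : MeasurableSet B) (hdisj : Disjoint B (-B))
    (hodd : ∀ y ∈ B, f (-y) = -f y) (hf : IntegrableOn f (B ∪ -B) μ) :
    ∫ y in B ∪ -B, f y ∂μ = 0 := by
  have hneg : ∫ y in -B, f y ∂μ = ∫ y in B, f (-y) ∂μ := by
    simpa using ((Measure.measurePreserving_neg μ).setIntegral_preimage_emb
      (MeasurableEquiv.neg G).measurableEmbedding f (-B)).symm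
  rw [setIntegral_union hdisj hB.neg (hf.mono_set subset_union_left)
    (hf.mono_set subset_union_right), hneg, setIntegral_congr_fun hB hodd, integral_neg,
    add_neg_cancel]

lemma integrableOn_inv_norm_rpow_closedBall_diff_ball {F : Type*} [NormedAddCommGroup F]
    [MeasurableSpace F] [BorelSpace F] [ProperSpace F] {μ : Measure F}
    [IsFiniteMeasureOnCompacts μ] (p : ℝ) {r : ℝ} (hr : 0 < r) (R : ℝ) :
    IntegrableOn (fun y => (‖y‖ ^ p)⁻¹) (closedBall 0 R \ ball 0 r) μ := by
  refine ContinuousOn.integrableOn_compact ((isCompact_closedBall 0 R).diff isOpen_ball)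
    fun y hy => ContinuousAt.continuousWithinAt ?_
  have hy : 0 < ‖y‖ := hr.trans_le (not_lt.1 (mem_ball_zero_iff.not.1 hy.2))
  exact (continuous_norm.continuousAt.rpow_const (Or.inl hy.ne')).inv₀ (by positivity)

lemma integrableOn_inv_norm_rpow_of_measure_closedBall_inter_le {F : Type*}
    [NormedAddCommGroup F] [MeasurableSpace F] [BorelSpace F] {μ : Measure F}
    [NullSingletonClass μ] {A : Set F} {p q ρ₀ : ℝ} {C : ℝ≥0∞} (hp : 0 ≤ p) (hpq : p < q)
    (hρ₀ : 0 < ρ₀) (hC : C ≠ ∞)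
    (hA : ∀ ρ ∈ Ioc 0 ρ₀, μ (closedBall 0 ρ ∩ A) ≤ C * ENNReal.ofReal (ρ ^ q)) :
    IntegrableOn (fun y => (‖y‖ ^ p)⁻¹) (closedBall 0 ρ₀ ∩ A) μ := by
  set ρ : ℕ → ℝ := fun k => ρ₀ / 2 ^ k
  have hρ : ∀ k, 0 < ρ k := fun k => by positivity
  set shell : ℕ → Set F := fun n => (closedBall 0 (ρ n) ∩ A) \ closedBall 0 (ρ (n + 1))
  have hcover : closedBall 0 ρ₀ ∩ A ⊆ (⋃ k, shell k) ∪ {0} := by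
    rintro y ⟨hyρ₀, hyA⟩
    rcases eq_or_ne y 0 with rfl | hy0
    · exact Or.inr rfl
    have hy : 0 < ‖y‖ := norm_pos_iff.2 hy0
    obtain ⟨k, hk, hk'⟩ := exists_nat_pow_near ((one_le_div hy).2 (mem_closedBall_zero_iff.1 hyρ₀))
      one_lt_two
    refine Or.inl (mem_iUnion.2 ⟨k, ⟨mem_closedBall_zero_iff.2 ?_, hyA⟩, ?_⟩)
    · rwa [le_div_iff₀ hy, ← le_div_iff₀' (by positivity)] at hk
    · rw [mem_closedBall_zero_iff, not_le]
      rwa [div_lt_iff₀ hy, ← div_lt_iff₀' (by positivity)] at hk'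
  have hshell : ∀ k, ∫⁻ y in shell k, ENNReal.ofReal (‖y‖ ^ p)⁻¹ ∂μ
      ≤ C * ENNReal.ofReal (2 ^ p * ρ₀ ^ (q - p)) * ENNReal.ofReal (2 ^ (p - q)) ^ k := by
    intro k
    calc ∫⁻ y in shell k, ENNReal.ofReal (‖y‖ ^ p)⁻¹ ∂μ
        ≤ ∫⁻ _ in shell k, ENNReal.ofReal (ρ (k + 1) ^ p)⁻¹ ∂μ := by
          refine setLIntegral_mono measurable_const fun y hy => ENNReal.ofReal_le_ofReal ?_
          have hy' : ρ (k + 1) < ‖y‖ := not_le.1 (mem_closedBall_zero_iff.not.1 hy.2)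
          exact inv_anti₀ (by positivity) (Real.rpow_le_rpow (hρ _).le hy'.le hp)
      _ ≤ ENNReal.ofReal (ρ (k + 1) ^ p)⁻¹ * (C * ENNReal.ofReal (ρ k ^ q)) := by
          rw [setLIntegral_const]
          gcongr
          exact (measure_mono sdiff_subset).trans
            (hA _ ⟨hρ k, div_le_self hρ₀.le (one_le_pow₀ one_le_two)⟩)
      _ = C * ENNReal.ofReal (2 ^ p * ρ₀ ^ (q - p)) * ENNReal.ofReal (2 ^ (p - q)) ^ k := by
          rw [← ENNReal.ofReal_pow (by positivity), mul_left_comm, mul_assoc,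
            ← ENNReal.ofReal_mul (by positivity), ← ENNReal.ofReal_mul (by positivity)]
          congr 2
          have hhalf : ρ (k + 1) = ρ k / 2 := by simp only [ρ, pow_succ, div_div]
          calc (ρ (k + 1) ^ p)⁻¹ * ρ k ^ q = 2 ^ p * (ρ k ^ q / ρ k ^ p) := by
                rw [hhalf, Real.div_rpow (hρ k).le zero_le_two]
                field_simp
            _ = 2 ^ p * (ρ₀ ^ (q - p) / (2 ^ k) ^ (q - p)) := by
                rw [← Real.rpow_sub (hρ k), Real.div_rpow hρ₀.le (by positivity)]
            _ = 2 ^ p * ρ₀ ^ (q - p) * (2 ^ (p - q)) ^ k := by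
                rw [← Real.rpow_pow_comm zero_le_two, show p - q = -(q - p) by ring,
                  Real.rpow_neg zero_le_two, inv_pow, div_eq_mul_inv, mul_assoc]
  refine ⟨(measurable_norm.pow_const p).inv.aestronglyMeasurable, ?_⟩
  rw [hasFiniteIntegral_iff_ofReal (ae_of_all _ fun y => by positivity)]
  calc ∫⁻ y in closedBall 0 ρ₀ ∩ A, ENNReal.ofReal (‖y‖ ^ p)⁻¹ ∂μ
      ≤ ∫⁻ y in (⋃ k, shell k) ∪ {0}, ENNReal.ofReal (‖y‖ ^ p)⁻¹ ∂μ := lintegral_mono_set hcover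
    _ ≤ (∫⁻ y in ⋃ k, shell k, ENNReal.ofReal (‖y‖ ^ p)⁻¹ ∂μ)
          + ∫⁻ y in {0}, ENNReal.ofReal (‖y‖ ^ p)⁻¹ ∂μ := lintegral_union_le _ _ _
    _ ≤ ∑' k, ∫⁻ y in shell k, ENNReal.ofReal (‖y‖ ^ p)⁻¹ ∂μ := by
        rw [Measure.restrict_singleton', lintegral_zero_measure, add_zero]
        exact lintegral_iUnion_le _ _
    _ ≤ ∑' k, C * ENNReal.ofReal (2 ^ p * ρ₀ ^ (q - p)) * ENNReal.ofReal (2 ^ (p - q)) ^ k :=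
        ENNReal.tsum_le_tsum hshell
    _ < ∞ := by
        rw [ENNReal.tsum_mul_left, ENNReal.tsum_geometric]
        refine ENNReal.mul_lt_top (ENNReal.mul_lt_top hC.lt_top ENNReal.ofReal_lt_top) ?_
        rw [ENNReal.inv_lt_top, tsub_pos_iff_lt, ENNReal.ofReal_lt_one]
        exact Real.rpow_lt_one_of_one_lt_of_neg one_lt_two (by linarith)

lemma two_mul_abs_inner_le_norm_sq_of_notMem_ball {F : Type*} [NormedAddCommGroup F]
    [InnerProductSpace ℝ F] {u y : F} (hu : ‖u‖ = 1) {δ : ℝ}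
    (hm : y ∉ ball (-(δ • u)) δ) (hp : y ∉ ball (δ • u) δ) :
    2 * δ * |⟪y, u⟫| ≤ ‖y‖ ^ 2 := by
  rcases le_or_gt δ 0 with hδ | hδ
  · nlinarith [abs_nonneg ⟪y, u⟫, sq_nonneg ‖y‖]
  have key : ∀ c : ℝ, |c| = δ → δ ≤ ‖y - c • u‖ → 2 * c * ⟪y, u⟫ ≤ ‖y‖ ^ 2 := by
    intro c hc hδc
    have := pow_le_pow_left₀ hδ.le hδc 2
    rw [norm_sub_sq_real, norm_smul, hu, real_inner_smul_right, Real.norm_eq_abs, hc] at this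
    linarith
  have hpos := key δ (abs_of_pos hδ) (by simpa [dist_eq_norm] using hp)
  have hneg := key (-δ) (by rw [abs_neg, abs_of_pos hδ]) (by simpa [dist_eq_norm] using hm)
  rw [abs_eq_max_neg, mul_max_of_nonneg _ _ (by positivity)]
  exact max_le (by linarith) (by linarith)

lemma volume_setOf_forall_abs_apply_le {d : ℕ} (c : Fin d → ℝ) :
    volume {y : EuclideanSpace ℝ (Fin d) | ∀ i, |y i| ≤ c i} = ∏ i, ENNReal.ofReal (2 * c i) := by
  have h : {y : EuclideanSpace ℝ (Fin d) | ∀ i, |y i| ≤ c i}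
      = (MeasurableEquiv.toLp 2 (Fin d → ℝ)).symm ⁻¹' univ.pi fun i => Icc (-c i) (c i) := by
    ext y
    simp only [mem_ofPred_eq, mem_preimage, mem_univ_pi, mem_Icc, abs_le]
    rfl
  rw [h, (EuclideanSpace.volume_preserving_symm_measurableEquiv_toLp (Fin d)).measure_preimage
    (MeasurableSet.univ_pi fun i => measurableSet_Icc).nullMeasurableSet, volume_pi_pi]
  simp_rw [Real.volume_Icc, sub_neg_eq_add, two_mul]

lemma volume_closedBall_inter_abs_apply_le_s3 {d : ℕ} (i : Fin d) (ρ h : ℝ) :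
    volume (closedBall (0 : EuclideanSpace ℝ (Fin d)) ρ ∩ {y | |y i| ≤ h})
      ≤ ENNReal.ofReal (2 * h) * ENNReal.ofReal (2 * ρ) ^ (d - 1) := by
  calc volume (closedBall (0 : EuclideanSpace ℝ (Fin d)) ρ ∩ {y | |y i| ≤ h})
      ≤ volume {y : EuclideanSpace ℝ (Fin d) |
          ∀ j, |y j| ≤ Function.update (fun _ => ρ) i h j} := by
        refine measure_mono fun y ⟨hyρ, hyh⟩ j => ?_
        rcases eq_or_ne j i with rfl | hj
        · simpa using hyh
        · simpa [hj] using (PiLp.norm_apply_le y j).trans (mem_closedBall_zero_iff.1 hyρ)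
    _ = ENNReal.ofReal (2 * h) * ENNReal.ofReal (2 * ρ) ^ (d - 1) := by
        rw [volume_setOf_forall_abs_apply_le, ← Finset.mul_prod_erase _ _ (Finset.mem_univ i),
          Finset.prod_congr rfl fun j hj =>
            by rw [Function.update_of_ne (Finset.ne_of_mem_erase hj)]]
        simp

lemma norm_ed {d : ℕ} (hd : 0 < d) : ‖ed d‖ = 1 := by
  simp [ed, hd]

lemma inner_ed {d : ℕ} (hd : 0 < d) (y : EuclideanSpace ℝ (Fin d)) :
    ⟪y, ed d⟫ = y ⟨d - 1, by omega⟩ := by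
  simp [ed, hd, EuclideanSpace.inner_single_right]

lemma volume_closedBall_inter_compl_tangentBalls_le {d : ℕ} (hd : 0 < d) {δ : ℝ} (hδ : 0 < δ)
    {ρ : ℝ} (hρ : 0 ≤ ρ) :
    volume (closedBall (0 : EuclideanSpace ℝ (Fin d)) ρ
        ∩ (ball (-(δ • ed d)) δ ∪ ball (δ • ed d) δ)ᶜ)
      ≤ ENNReal.ofReal (2 ^ (d - 1) / δ) * ENNReal.ofReal (ρ ^ ((d : ℝ) + 1)) := by
  calc _ ≤ volume (closedBall (0 : EuclideanSpace ℝ (Fin d)) ρ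
          ∩ {y | |y ⟨d - 1, by omega⟩| ≤ ρ ^ 2 / (2 * δ)}) := by
        refine measure_mono fun y ⟨hyρ, hyU⟩ => ⟨hyρ, ?_⟩
        rw [compl_union] at hyU
        have h := two_mul_abs_inner_le_norm_sq_of_notMem_ball (norm_ed hd) hyU.1 hyU.2
        rw [inner_ed hd] at h
        rw [mem_ofPred_eq, le_div_iff₀ (by positivity)]
        have := mem_closedBall_zero_iff.1 hyρ
        nlinarith [norm_nonneg y]
    _ ≤ ENNReal.ofReal (2 * (ρ ^ 2 / (2 * δ))) * ENNReal.ofReal (2 * ρ) ^ (d - 1) :=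
        volume_closedBall_inter_abs_apply_le_s3 _ _ _
    _ = ENNReal.ofReal (2 ^ (d - 1) / δ) * ENNReal.ofReal (ρ ^ ((d : ℝ) + 1)) := by
        rw [← ENNReal.ofReal_pow (by positivity), ← ENNReal.ofReal_mul (by positivity),
          ← ENNReal.ofReal_mul (by positivity)]
        congr 1
        rw [show (d : ℝ) + 1 = ((d - 1 + 2 : ℕ) : ℝ) by push_cast [Nat.cast_sub hd]; ring,
          Real.rpow_natCast]
        field_simp
        ring

lemma integrableOn_inv_norm_rpow_ball_diff_tangentBalls {d : ℕ} (hd : 0 < d) {δ : ℝ} (hδ : 0 < δ)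
    {p : ℝ} (hp : 0 ≤ p) (hpd : p < d + 1) {η : ℝ} (hη : 0 < η) :
    IntegrableOn (fun y => (‖y‖ ^ p)⁻¹)
      (ball (0 : EuclideanSpace ℝ (Fin d)) η \ (ball (-(δ • ed d)) δ ∪ ball (δ • ed d) δ)) := by
  have : Nonempty (Fin d) := ⟨⟨0, hd⟩⟩
  refine (integrableOn_inv_norm_rpow_of_measure_closedBall_inter_le hp hpd hη
    ENNReal.ofReal_ne_top fun ρ hρ => volume_closedBall_inter_compl_tangentBalls_le hd hδ hρ.1.le
    ).mono_set ?_
  rw [sdiff_eq]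
  exact inter_subset_inter_left _ ball_subset_closedBall

section ChiDiff

variable {d : ℕ} {E : Set (EuclideanSpace ℝ (Fin d))}

lemma measurable_chiDiff (hE : MeasurableSet E) :
    Measurable (chiDiff E) :=
  (measurable_const.indicator hE.compl).sub (measurable_const.indicator hE)

lemma abs_chiDiff_le_one (E : Set (EuclideanSpace ℝ (Fin d))) (y : EuclideanSpace ℝ (Fin d)) :
    |chiDiff E y| ≤ 1 := by
  by_cases hy : y ∈ E <;> simp [chiDiff, hy]

lemma chiDiff_of_mem {y : EuclideanSpace ℝ (Fin d)} (hy : y ∈ E) : chiDiff E y = -1 := by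
  simp [chiDiff, hy]

lemma chiDiff_of_notMem {y : EuclideanSpace ℝ (Fin d)} (hy : y ∉ E) : chiDiff E y = 1 := by
  simp [chiDiff, hy]

lemma integrableOn_chiDiff_div (hE : MeasurableSet E) {p : ℝ} {s : Set (EuclideanSpace ℝ (Fin d))}
    (h : IntegrableOn (fun y => (‖y‖ ^ p)⁻¹) s) :
    IntegrableOn (fun y => chiDiff E y / ‖y‖ ^ p) s := by
  refine h.mono' ((measurable_chiDiff hE).div (measurable_norm.pow_const p)).aestronglyMeasurable
    (ae_of_all _ fun y => ?_)
  rw [norm_div, Real.norm_eq_abs, Real.norm_of_nonneg (by positivity), div_eq_mul_inv]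
  exact mul_le_of_le_one_left (by positivity) (abs_chiDiff_le_one E y)

lemma setIntegral_ball_diff_ball_eq_diff_tangentBalls (hE : MeasurableSet E)
    {v : EuclideanSpace ℝ (Fin d)} {δ : ℝ}
    (hin : ball (-v) δ ⊆ E) (hout : ball v δ ⊆ Eᶜ) (p : ℝ) {η r : ℝ} (hr : 0 < r) :
    ∫ y in ball 0 η \ ball 0 r, chiDiff E y / ‖y‖ ^ p
      = ∫ y in (ball 0 η \ (ball (-v) δ ∪ ball v δ)) \ ball 0 r, chiDiff E y / ‖y‖ ^ p := by
  set S := ball (0 : EuclideanSpace ℝ (Fin d)) η \ ball 0 r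
  have hS : IntegrableOn (fun y => chiDiff E y / ‖y‖ ^ p) S :=
    integrableOn_chiDiff_div hE <| (integrableOn_inv_norm_rpow_closedBall_diff_ball p hr η).mono_set
      (sdiff_subset_sdiff_left ball_subset_closedBall)
  have hnegS : -(S ∩ ball v δ) = S ∩ ball (-v) δ := by
    ext y
    simp [S, dist_eq_norm, add_comm]
  have hodd : ∫ y in S ∩ (ball (-v) δ ∪ ball v δ), chiDiff E y / ‖y‖ ^ p = 0 := by
    rw [inter_union_distrib_left, union_comm, ← hnegS]
    refine setIntegral_union_neg_eq_zero
      ((measurableSet_ball.diff measurableSet_ball).inter measurableSet_ball) ?_ ?_ ?_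
    · rw [hnegS]
      exact (disjoint_compl_left.mono hout hin).mono inter_subset_right inter_subset_right
    · intro y hy
      have hy' : -y ∈ S ∩ ball (-v) δ := by rw [← hnegS]; simpa using hy
      rw [chiDiff_of_mem (hin hy'.2), chiDiff_of_notMem (hout hy.2), norm_neg, neg_div]
    · rw [hnegS, ← inter_union_distrib_left]
      exact hS.mono_set inter_subset_left
  rw [← integral_inter_add_sdiff (measurableSet_ball.union measurableSet_ball) hS, hodd,
    zero_add, sdiff_sdiff_comm]

end ChiDiff

/-- with tangent balls `B_δ(-δe_d) ⊆ E`, `B_δ(δe_d) ⊆ Eᶜ`, the principal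
value over `B_η` exists and equals the integral outside the two tangent balls. -/
theorem stmt_3 (d : ℕ) (hd : 0 < d) (E : Set (EuclideanSpace ℝ (Fin d)))
    (hE : MeasurableSet E) (δ : ℝ) (hδ : 0 < δ)
    (hin : Metric.ball (-(δ • ed d)) δ ⊆ E)
    (hout : Metric.ball (δ • ed d) δ ⊆ Eᶜ)
    (s : ℝ) (hs : s ∈ Set.Ico (0:ℝ) 1) (η : ℝ) (hη : 0 < η) :
    Tendsto (fun r : ℝ =>
        ∫ y in Metric.ball (0 : EuclideanSpace ℝ (Fin d)) η \ Metric.ball 0 r,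
          chiDiff E y / ‖y‖ ^ ((d:ℝ) + s))
      (nhdsWithin 0 (Set.Ioi 0))
      (nhds (∫ y in Metric.ball (0 : EuclideanSpace ℝ (Fin d)) η \
          (Metric.ball (-(δ • ed d)) δ ∪ Metric.ball (δ • ed d) δ),
        chiDiff E y / ‖y‖ ^ ((d:ℝ) + s))) := by
  have : Nonempty (Fin d) := ⟨⟨0, hd⟩⟩
  have hint := integrableOn_chiDiff_div hE <| integrableOn_inv_norm_rpow_ball_diff_tangentBalls hd
    hδ (by linarith [hs.1] : 0 ≤ (d : ℝ) + s) (by linarith [hs.2]) hη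
  refine (tendsto_setIntegral_diff_ball hint 0).congr' ?_
  filter_upwards [self_mem_nhdsWithin] with r hr
  exact (setIntegral_ball_diff_ball_eq_diff_tangentBalls hE hin hout _ hr).symm
end
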